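/- arXiv:2404.10950 — 2 statements merged into one kernel-verified Lean document; each statement's English description precedes it below -/
import Mathlib

section
/- Let α ∈ (1,∞), let p_X be a strictly positive probability distribution on 𝒳 and p_{Y|X} a channel with p_{Y|X}(y|x) > 0 for all x, y. Then I_α^S = sup over strictly positive probability distributions q̃_{X,Y} on 𝒳×𝒴 and strictly positive reverse channels r_{X|Y} of F̃_α^{S3}(p_X, q̃_{X,Y}, r_{X|Y}) := (α/(1−α)) D(q̃_{X,Y} ‖ q̃_X p_{Y|X}) + Σ_{x,y} q̃_{X,Y}(x,y) log( r_{X|Y}(x|y) / q̃_X(x) ) + (1/(1−α)) D(q̃_X ‖ p_X), where q̃_X(x) := Σ_y q̃_{X,Y}(x,y), and the supremum is attained. -/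
/-- A probability mass function on a finite type. -/
def IsPMF {Z : Type*} [Fintype Z] (q : Z → ℝ) : Prop :=
  (∀ z, 0 ≤ q z) ∧ ∑ z, q z = 1

/-- Kullback--Leibler divergence (natural log). -/
noncomputable def klD {Z : Type*} [Fintype Z] (p q : Z → ℝ) : ℝ :=
  ∑ z, p z * Real.log (p z / q z)

/-- Rényi divergence of order `α`, valued in `EReal` (equal to `⊤` when `α > 1` and
`q` vanishes somewhere on the support of `p`). -/
noncomputable def renyiDE {Z : Type*} [Fintype Z] (α : ℝ) (p q : Z → ℝ) : EReal :=
  if 1 < α ∧ ∃ z, p z ≠ 0 ∧ q z = 0 then ⊤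
  else (((1 / (α - 1)) * Real.log (∑ z, p z ^ α * q z ^ (1 - α)) : ℝ) : EReal)

/-- Sibson mutual information of order `α`. -/
noncomputable def sibsonMI {X Y : Type*} [Fintype X] [Fintype Y]
    (α : ℝ) (pX : X → ℝ) (pYX : X → Y → ℝ) : EReal :=
  sInf {v : EReal | ∃ qY : Y → ℝ, IsPMF qY ∧
    v = renyiDE α (fun z : X × Y => pX z.1 * pYX z.1 z.2)
          (fun z : X × Y => pX z.1 * qY z.2)}

/-!
Write `c_y = ∑ₓ p_X(x) p_{Y|X}(y|x)^α` and `S = ∑_y c_y^{1/α}`. For a positive `q_Y` the Rényi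
divergence `D_α(p_X p_{Y|X} ‖ p_X q_Y)` equals `(1/(α-1)) log ∑_y c_y q_Y(y)^{1-α}`, which Hölder's
inequality bounds below by `(α/(α-1)) log S`, with equality at `q_Y ∝ c^{1/α}`; hence
`I_α^S = (α/(α-1)) log S`.

On the other side, `F̃_α^{S3}` regroups as `(α/(α-1)) ∑ q̃ log (u / q̃)` with
`u(x,y) = (p_X(x) p_{Y|X}(y|x)^α)^{1/α} r(x|y)^{1-1/α}`. Gibbs' inequality bounds this by
`(α/(α-1)) log ∑ u`, and Hölder's inequality in `x` for each `y` gives `∑ u ≤ S`. Both steps are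
equalities for `r(x|y) ∝ p_X(x) p_{Y|X}(y|x)^α` and `q̃(x,y) = q_Y^*(y) r(x|y)`, for which
`u / q̃ ≡ S`.
-/

open Finset Real

section Inequalities

variable {ι : Type*} [Fintype ι]

theorem sum_mul_log_div_le_log_sum {q u : ι → ℝ} (hq : ∀ i, 0 < q i) (hq1 : ∑ i, q i = 1)
    (hu : ∀ i, 0 < u i) :
    ∑ i, q i * log (u i / q i) ≤ log (∑ i, u i) := by
  have h := strictConcaveOn_log_Ioi.concaveOn.le_map_sum (t := univ) (p := fun i => u i / q i)
    (fun i _ => (hq i).le) hq1 (fun i _ => div_pos (hu i) (hq i))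
  simpa only [smul_eq_mul, mul_div_cancel₀ _ (hq _).ne'] using h

theorem sum_rpow_inv_mul_rpow_le {α : ℝ} (hα : 1 < α) {a w : ι → ℝ} (ha : ∀ i, 0 ≤ a i)
    (hw : ∀ i, 0 ≤ w i) (hw1 : ∑ i, w i = 1) :
    ∑ i, a i ^ α⁻¹ * w i ^ (1 - α⁻¹) ≤ (∑ i, a i) ^ α⁻¹ := by
  have h := inner_le_Lp_mul_Lq_of_nonneg univ (Real.HolderConjugate.conjExponent hα)
    (f := fun i => a i ^ α⁻¹) (g := fun i => w i ^ (1 - α⁻¹))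
    (fun i _ => rpow_nonneg (ha i) _) (fun i _ => rpow_nonneg (hw i) _)
  have hexp : (1 - α⁻¹) * α.conjExponent = 1 := by
    have : α - 1 ≠ 0 := by linarith
    rw [conjExponent]; field_simp
  simpa only [← rpow_mul (ha _), inv_mul_cancel₀ (by positivity : α ≠ 0), rpow_one,
    ← rpow_mul (hw _), hexp, hw1, one_rpow, mul_one, one_div] using h

theorem sum_rpow_inv_le {α : ℝ} (hα : 1 < α) {c w : ι → ℝ} (hc : ∀ i, 0 ≤ c i)
    (hw : ∀ i, 0 < w i) (hw1 : ∑ i, w i = 1) :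
    ∑ i, c i ^ α⁻¹ ≤ (∑ i, c i * w i ^ (1 - α)) ^ α⁻¹ := by
  have hterm : ∀ i, (c i * w i ^ (1 - α)) ^ α⁻¹ * w i ^ (1 - α⁻¹) = c i ^ α⁻¹ := by
    intro i
    have hα0 : α ≠ 0 := by positivity
    rw [mul_rpow (hc i) (rpow_nonneg (hw i).le _), ← rpow_mul (hw i).le, mul_assoc,
      ← rpow_add (hw i), show (1 - α) * α⁻¹ + (1 - α⁻¹) = 0 by field_simp; ring, rpow_zero,
      mul_one]
  simpa only [hterm] using sum_rpow_inv_mul_rpow_le hα (a := fun i => c i * w i ^ (1 - α))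
    (fun i => mul_nonneg (hc i) (rpow_nonneg (hw i).le _)) (fun i => (hw i).le) hw1

end Inequalities

section Sibson

variable {X Y : Type*} [Fintype X] {α : ℝ} {pX : X → ℝ} {pYX : X → Y → ℝ}

variable (α pX pYX) in
noncomputable def sibsonMoment (y : Y) : ℝ :=
  ∑ x, pX x * pYX x y ^ α

variable (α pX pYX) in
noncomputable def sibsonMass [Fintype Y] : ℝ :=
  ∑ y, sibsonMoment α pX pYX y ^ α⁻¹

theorem sibsonMoment_pos [Nonempty X] (hpX : ∀ x, 0 < pX x) (hpYX : ∀ x y, 0 < pYX x y)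
    (y : Y) : 0 < sibsonMoment α pX pYX y :=
  sum_pos (fun x _ => mul_pos (hpX x) (rpow_pos_of_pos (hpYX x y) α)) univ_nonempty

theorem sibsonMass_pos [Fintype Y] [Nonempty X] [Nonempty Y] (hpX : ∀ x, 0 < pX x)
    (hpYX : ∀ x y, 0 < pYX x y) : 0 < sibsonMass α pX pYX :=
  sum_pos (fun y _ => rpow_pos_of_pos (sibsonMoment_pos hpX hpYX y) _) univ_nonempty

variable (α pX pYX) in
noncomputable def sibsonOutput [Fintype Y] (y : Y) : ℝ :=
  sibsonMoment α pX pYX y ^ α⁻¹ / sibsonMass α pX pYX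

theorem sibsonOutput_pos [Fintype Y] [Nonempty X] [Nonempty Y] (hpX : ∀ x, 0 < pX x)
    (hpYX : ∀ x y, 0 < pYX x y) (y : Y) : 0 < sibsonOutput α pX pYX y :=
  div_pos (rpow_pos_of_pos (sibsonMoment_pos hpX hpYX y) _) (sibsonMass_pos hpX hpYX)

theorem sum_sibsonOutput [Fintype Y] [Nonempty X] [Nonempty Y] (hpX : ∀ x, 0 < pX x)
    (hpYX : ∀ x y, 0 < pYX x y) : ∑ y, sibsonOutput α pX pYX y = 1 := by
  unfold sibsonOutput
  rw [← sum_div]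
  exact div_self (sibsonMass_pos hpX hpYX).ne'

theorem renyiDE_joint_eq [Fintype Y] (hpX : ∀ x, 0 < pX x) (hpYX : ∀ x y, 0 ≤ pYX x y)
    {qY : Y → ℝ} (hqY : ∀ y, 0 < qY y) :
    renyiDE α (fun z : X × Y => pX z.1 * pYX z.1 z.2) (fun z : X × Y => pX z.1 * qY z.2) =
      ((1 / (α - 1) * log (∑ y, sibsonMoment α pX pYX y * qY y ^ (1 - α)) : ℝ) : EReal) := by
  have hq : ¬ ∃ z : X × Y, pX z.1 * pYX z.1 z.2 ≠ 0 ∧ pX z.1 * qY z.2 = 0 :=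
    fun ⟨z, _, h⟩ => (mul_pos (hpX z.1) (hqY z.2)).ne' h
  rw [renyiDE, if_neg (fun h => hq h.2), Fintype.sum_prod_type, Finset.sum_comm]
  congr 4 with y
  rw [sibsonMoment, sum_mul]
  refine sum_congr rfl fun x _ => ?_
  have hp := hpX x
  rw [mul_rpow hp.le (hpYX x y), mul_rpow hp.le (hqY y).le]
  calc pX x ^ α * pYX x y ^ α * (pX x ^ (1 - α) * qY y ^ (1 - α))
      = pX x ^ (α + (1 - α)) * pYX x y ^ α * qY y ^ (1 - α) := by rw [rpow_add hp]; ring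
    _ = pX x * pYX x y ^ α * qY y ^ (1 - α) := by rw [add_sub_cancel, rpow_one]

theorem renyiDE_joint_eq_top [Fintype Y] [Nonempty X] (hα : 1 < α) (hpX : ∀ x, 0 < pX x)
    (hpYX : ∀ x y, 0 < pYX x y) {qY : Y → ℝ} {y : Y} (hy : qY y = 0) :
    renyiDE α (fun z : X × Y => pX z.1 * pYX z.1 z.2) (fun z : X × Y => pX z.1 * qY z.2) = ⊤ :=
  if_pos ⟨hα, (Classical.arbitrary X, y), (mul_pos (hpX _) (hpYX _ _)).ne', by simp [hy]⟩

theorem renyiDE_joint_sibsonOutput [Fintype Y] [Nonempty X] [Nonempty Y]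
    (hα : 1 < α) (hpX : ∀ x, 0 < pX x) (hpYX : ∀ x y, 0 < pYX x y) :
    renyiDE α (fun z : X × Y => pX z.1 * pYX z.1 z.2)
        (fun z : X × Y => pX z.1 * sibsonOutput α pX pYX z.2) =
      ((α / (α - 1) * log (sibsonMass α pX pYX) : ℝ) : EReal) := by
  set S := sibsonMass α pX pYX
  have hS : 0 < S := sibsonMass_pos hpX hpYX
  have hterm : ∀ a : ℝ, 0 < a → a * (a ^ α⁻¹ / S) ^ (1 - α) = a ^ α⁻¹ * S ^ (α - 1) := by
    intro a ha
    rw [div_rpow (rpow_nonneg ha.le _) hS.le, ← rpow_mul ha.le, mul_div_assoc',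
      div_eq_iff (rpow_pos_of_pos hS _).ne', mul_assoc, ← rpow_add hS, mul_comm a,
      ← rpow_add_one ha.ne', show α - 1 + (1 - α) = 0 by ring, rpow_zero, mul_one]
    congr 1
    field_simp
    ring
  have hsum : ∑ y, sibsonMoment α pX pYX y * sibsonOutput α pX pYX y ^ (1 - α) =
      S * S ^ (α - 1) := by
    unfold sibsonOutput
    rw [sum_congr rfl fun y _ => hterm _ (sibsonMoment_pos hpX hpYX y), ← sum_mul]
    rfl
  have hα1 : α - 1 ≠ 0 := by linarith
  rw [renyiDE_joint_eq hpX (fun x y => (hpYX x y).le) (sibsonOutput_pos hpX hpYX), hsum,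
    log_mul hS.ne' (by positivity), log_rpow hS]
  congr 1
  field_simp
  ring

theorem le_renyiDE_joint [Fintype Y] [Nonempty X] [Nonempty Y] (hα : 1 < α)
    (hpX : ∀ x, 0 < pX x) (hpYX : ∀ x y, 0 < pYX x y) {qY : Y → ℝ} (hqY : IsPMF qY) :
    ((α / (α - 1) * log (sibsonMass α pX pYX) : ℝ) : EReal) ≤
      renyiDE α (fun z : X × Y => pX z.1 * pYX z.1 z.2) (fun z : X × Y => pX z.1 * qY z.2) := by
  by_cases h : ∃ y, qY y = 0
  · obtain ⟨y, hy⟩ := h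
    rw [renyiDE_joint_eq_top hα hpX hpYX hy]
    exact le_top
  push Not at h
  have hqY_pos : ∀ y, 0 < qY y := fun y => (hqY.1 y).lt_of_ne' (h y)
  set c := sibsonMoment α pX pYX
  have hc := sibsonMoment_pos (α := α) hpX hpYX
  have hT : 0 < ∑ y, c y * qY y ^ (1 - α) :=
    sum_pos (fun y _ => mul_pos (hc y) (rpow_pos_of_pos (hqY_pos y) _)) univ_nonempty
  have hlog : log (sibsonMass α pX pYX) ≤ α⁻¹ * log (∑ y, c y * qY y ^ (1 - α)) := by
    rw [← log_rpow hT]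
    exact log_le_log (sibsonMass_pos hpX hpYX)
      (sum_rpow_inv_le hα (fun y => (hc y).le) hqY_pos hqY.2)
  have hα1 : 0 < α - 1 := by linarith
  rw [renyiDE_joint_eq hpX (fun x y => (hpYX x y).le) hqY_pos]
  refine EReal.coe_le_coe_iff.2 ?_
  calc α / (α - 1) * log (sibsonMass α pX pYX)
      ≤ α / (α - 1) * (α⁻¹ * log (∑ y, c y * qY y ^ (1 - α))) :=
        mul_le_mul_of_nonneg_left hlog (by positivity)
    _ = 1 / (α - 1) * log (∑ y, c y * qY y ^ (1 - α)) := by field_simp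

theorem sibsonMI_eq_mul_log_sibsonMass [Fintype Y] [Nonempty X] [Nonempty Y] (hα : 1 < α)
    (hpX : ∀ x, 0 < pX x) (hpYX : ∀ x y, 0 < pYX x y) :
    sibsonMI α pX pYX = ((α / (α - 1) * log (sibsonMass α pX pYX) : ℝ) : EReal) :=
  IsGLB.sInf_eq <| IsLeast.isGLB
    ⟨⟨sibsonOutput α pX pYX, ⟨fun y => (sibsonOutput_pos hpX hpYX y).le,
        sum_sibsonOutput hpX hpYX⟩, (renyiDE_joint_sibsonOutput hα hpX hpYX).symm⟩,
      fun _ ⟨_, hqY, hv⟩ => hv ▸ le_renyiDE_joint hα hpX hpYX hqY⟩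

variable (α pX pYX) in
noncomputable def sibsonFS3 [Fintype Y] (qt : X × Y → ℝ) (r : Y → X → ℝ) : ℝ :=
  (α / (1 - α)) * klD qt (fun z : X × Y => (∑ y, qt (z.1, y)) * pYX z.1 z.2)
    + ∑ z : X × Y, qt z * log (r z.2 z.1 / ∑ y, qt (z.1, y))
    + (1 / (1 - α)) * klD (fun x => ∑ y, qt (x, y)) pX

theorem sibsonFS3_eq [Fintype Y] (hα0 : α ≠ 0) (hα1 : α ≠ 1) (hpX : ∀ x, 0 < pX x)
    (hpYX : ∀ x y, 0 < pYX x y) {qt : X × Y → ℝ} (hqt : ∀ z, 0 < qt z) {r : Y → X → ℝ}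
    (hr : ∀ y x, 0 < r y x) :
    sibsonFS3 α pX pYX qt r = α / (α - 1) * ∑ z : X × Y, qt z *
      log ((pX z.1 * pYX z.1 z.2 ^ α) ^ α⁻¹ * r z.2 z.1 ^ (1 - α⁻¹) / qt z) := by
  have hα_sub : α - 1 ≠ 0 := sub_ne_zero.2 hα1
  have hsub_α : 1 - α ≠ 0 := sub_ne_zero.2 hα1.symm
  have hmarg : klD (fun x => ∑ y, qt (x, y)) pX =
      ∑ z : X × Y, qt z * log ((∑ y, qt (z.1, y)) / pX z.1) := by
    rw [klD, Fintype.sum_prod_type]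
    exact sum_congr rfl fun x _ => sum_mul ..
  rw [sibsonFS3, hmarg, klD, mul_sum, mul_sum, mul_sum, ← sum_add_distrib, ← sum_add_distrib]
  refine sum_congr rfl fun z _ => ?_
  have hp := hpX z.1
  have hpy := hpYX z.1 z.2
  have hq := hqt z
  have hqx : 0 < ∑ y, qt (z.1, y) := sum_pos (fun y _ => hqt _) ⟨z.2, mem_univ _⟩
  have hrz := hr z.2 z.1
  rw [log_div hq.ne' (by positivity), log_mul hqx.ne' hpy.ne', log_div hrz.ne' hqx.ne',
    log_div hqx.ne' hp.ne', log_div (by positivity) hq.ne', log_mul (by positivity) (by positivity),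
    log_rpow (by positivity), log_mul hp.ne' (by positivity), log_rpow hpy, log_rpow hrz]
  field_simp
  ring

theorem sibsonFS3_le [Fintype Y] (hα : 1 < α) (hpX : ∀ x, 0 < pX x) (hpYX : ∀ x y, 0 < pYX x y)
    {qt : X × Y → ℝ} (hqt : IsPMF qt) (hqt_pos : ∀ z, 0 < qt z) {r : Y → X → ℝ}
    (hr : ∀ y, IsPMF (r y)) (hr_pos : ∀ y x, 0 < r y x) :
    sibsonFS3 α pX pYX qt r ≤ α / (α - 1) * log (sibsonMass α pX pYX) := by
  set u : X × Y → ℝ := fun z => (pX z.1 * pYX z.1 z.2 ^ α) ^ α⁻¹ * r z.2 z.1 ^ (1 - α⁻¹)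
  have hu : ∀ z, 0 < u z := fun z => by
    have := hpX z.1; have := hpYX z.1 z.2; have := hr_pos z.2 z.1; positivity
  have hne : (univ : Finset (X × Y)).Nonempty :=
    nonempty_of_sum_ne_zero (f := qt) (by rw [hqt.2]; exact one_ne_zero)
  have hu_le : ∑ z, u z ≤ sibsonMass α pX pYX := by
    rw [Fintype.sum_prod_type, Finset.sum_comm]
    exact sum_le_sum fun y _ => sum_rpow_inv_mul_rpow_le hα
      (fun x => (mul_pos (hpX x) (rpow_pos_of_pos (hpYX x y) α)).le) (hr y).1 (hr y).2
  have hα1 : 0 ≤ α / (α - 1) := div_nonneg (by linarith) (by linarith)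
  rw [sibsonFS3_eq (by linarith) hα.ne' hpX hpYX hqt_pos hr_pos]
  calc α / (α - 1) * ∑ z, qt z * log (u z / qt z)
      ≤ α / (α - 1) * log (∑ z, u z) :=
        mul_le_mul_of_nonneg_left (sum_mul_log_div_le_log_sum hqt_pos hqt.2 hu) hα1
    _ ≤ α / (α - 1) * log (sibsonMass α pX pYX) :=
        mul_le_mul_of_nonneg_left (log_le_log (sum_pos (fun z _ => hu z) hne) hu_le) hα1

variable (α pX pYX) in
noncomputable def sibsonReverse (y : Y) (x : X) : ℝ :=
  pX x * pYX x y ^ α / sibsonMoment α pX pYX y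

variable (α pX pYX) in
noncomputable def sibsonJoint [Fintype Y] (z : X × Y) : ℝ :=
  sibsonOutput α pX pYX z.2 * sibsonReverse α pX pYX z.2 z.1

theorem sibsonReverse_pos [Nonempty X] (hpX : ∀ x, 0 < pX x) (hpYX : ∀ x y, 0 < pYX x y)
    (y : Y) (x : X) : 0 < sibsonReverse α pX pYX y x :=
  div_pos (mul_pos (hpX x) (rpow_pos_of_pos (hpYX x y) α)) (sibsonMoment_pos hpX hpYX y)

theorem sum_sibsonReverse [Nonempty X] (hpX : ∀ x, 0 < pX x) (hpYX : ∀ x y, 0 < pYX x y)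
    (y : Y) : ∑ x, sibsonReverse α pX pYX y x = 1 := by
  unfold sibsonReverse
  rw [← sum_div]
  exact div_self (sibsonMoment_pos hpX hpYX y).ne'

theorem sibsonJoint_pos [Fintype Y] [Nonempty X] [Nonempty Y] (hpX : ∀ x, 0 < pX x)
    (hpYX : ∀ x y, 0 < pYX x y) (z : X × Y) : 0 < sibsonJoint α pX pYX z :=
  mul_pos (sibsonOutput_pos hpX hpYX z.2) (sibsonReverse_pos hpX hpYX z.2 z.1)

theorem sum_sibsonJoint [Fintype Y] [Nonempty X] [Nonempty Y] (hpX : ∀ x, 0 < pX x)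
    (hpYX : ∀ x y, 0 < pYX x y) : ∑ z, sibsonJoint α pX pYX z = 1 := by
  simp only [sibsonJoint, Fintype.sum_prod_type_right, ← mul_sum, sum_sibsonReverse hpX hpYX,
    mul_one, sum_sibsonOutput hpX hpYX]

theorem sibsonFS3_sibsonJoint [Fintype Y] [Nonempty X] [Nonempty Y] (hα : 1 < α)
    (hpX : ∀ x, 0 < pX x) (hpYX : ∀ x y, 0 < pYX x y) :
    sibsonFS3 α pX pYX (sibsonJoint α pX pYX) (sibsonReverse α pX pYX) =
      α / (α - 1) * log (sibsonMass α pX pYX) := by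
  have hratio : ∀ z : X × Y, (pX z.1 * pYX z.1 z.2 ^ α) ^ α⁻¹ *
      sibsonReverse α pX pYX z.2 z.1 ^ (1 - α⁻¹) / sibsonJoint α pX pYX z =
        sibsonMass α pX pYX := by
    intro z
    have ha := mul_pos (hpX z.1) (rpow_pos_of_pos (hpYX z.1 z.2) α)
    have hc := sibsonMoment_pos (α := α) hpX hpYX z.2
    have hS := sibsonMass_pos (α := α) hpX hpYX
    simp only [sibsonJoint, sibsonOutput, sibsonReverse]
    rw [rpow_sub (div_pos ha hc), rpow_one, div_rpow ha.le hc.le]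
    field_simp
    exact div_self ha.ne'
  rw [sibsonFS3_eq (by linarith) hα.ne' hpX hpYX (sibsonJoint_pos hpX hpYX)
    (sibsonReverse_pos hpX hpYX)]
  simp only [hratio, ← sum_mul, sum_sibsonJoint hpX hpYX, one_mul]

end Sibson

theorem sibsonMI_eq_sup_FS3_general {X Y : Type*} [Fintype X] [Fintype Y] [Nonempty X] [Nonempty Y]
    (α : ℝ) (hα : 1 < α)
    (pX : X → ℝ) (hpXpos : ∀ x, 0 < pX x)
    (pYX : X → Y → ℝ) (hpYXpos : ∀ x y, 0 < pYX x y) :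
    IsGreatest
      {v : EReal | ∃ qt : X × Y → ℝ, IsPMF qt ∧ (∀ z, 0 < qt z) ∧
        ∃ r : Y → X → ℝ, (∀ y, IsPMF (r y)) ∧ (∀ y x, 0 < r y x) ∧
        v = (((α / (1 - α)) *
                klD qt (fun z : X × Y => (∑ y, qt (z.1, y)) * pYX z.1 z.2)
              + ∑ z : X × Y, qt z * Real.log (r z.2 z.1 / ∑ y, qt (z.1, y))
              + (1 / (1 - α)) * klD (fun x => ∑ y, qt (x, y)) pX : ℝ) : EReal)}
      (sibsonMI α pX pYX) := by
  rw [sibsonMI_eq_mul_log_sibsonMass hα hpXpos hpYXpos]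
  constructor
  · exact ⟨sibsonJoint α pX pYX,
      ⟨fun z => (sibsonJoint_pos hpXpos hpYXpos z).le, sum_sibsonJoint hpXpos hpYXpos⟩,
      sibsonJoint_pos hpXpos hpYXpos, sibsonReverse α pX pYX,
      fun y => ⟨fun x => (sibsonReverse_pos hpXpos hpYXpos y x).le,
        sum_sibsonReverse hpXpos hpYXpos y⟩,
      sibsonReverse_pos hpXpos hpYXpos,
      congrArg _ (sibsonFS3_sibsonJoint hα hpXpos hpYXpos).symm⟩
  · rintro v ⟨qt, hqt, hqt_pos, r, hr, hr_pos, rfl⟩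
    exact EReal.coe_le_coe_iff.2 (sibsonFS3_le hα hpXpos hpYXpos hqt hqt_pos hr hr_pos)

/-- For `α > 1`, the Sibson mutual information of order `α` is the supremum, over strictly
positive joint distributions `q̃_{X,Y}` and strictly positive reverse channels `r_{X|Y}`, of
`F̃_α^{S3}(p_X, q̃_{X,Y}, r) = (α/(1−α)) D(q̃_{X,Y} ‖ q̃_X p_{Y|X})
  + Σ_{x,y} q̃_{X,Y}(x,y) log(r(x|y)/q̃_X(x)) + (1/(1−α)) D(q̃_X ‖ p_X)`,
and the supremum is attained. -/
theorem sibsonMI_eq_sup_FS3 {X Y : Type*} [Fintype X] [Fintype Y] [Nonempty X] [Nonempty Y]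
    (α : ℝ) (hα : 1 < α)
    (pX : X → ℝ) (hpX : IsPMF pX) (hpXpos : ∀ x, 0 < pX x)
    (pYX : X → Y → ℝ) (hpYX : ∀ x, IsPMF (pYX x)) (hpYXpos : ∀ x y, 0 < pYX x y) :
    IsGreatest
      {v : EReal | ∃ qt : X × Y → ℝ, IsPMF qt ∧ (∀ z, 0 < qt z) ∧
        ∃ r : Y → X → ℝ, (∀ y, IsPMF (r y)) ∧ (∀ y x, 0 < r y x) ∧
        v = (((α / (1 - α)) *
                klD qt (fun z : X × Y => (∑ y, qt (z.1, y)) * pYX z.1 z.2)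
              + ∑ z : X × Y, qt z * Real.log (r z.2 z.1 / ∑ y, qt (z.1, y))
              + (1 / (1 - α)) * klD (fun x => ∑ y, qt (x, y)) pX : ℝ) : EReal)}
      (sibsonMI α pX pYX) :=
  sibsonMI_eq_sup_FS3_general α hα pX hpXpos pYX hpYXpos
end

section
/- Let α ∈ (0,1)∪(1,∞), let p_X be a strictly positive probability distribution on 𝒳 and p_{Y|X} a channel with p_{Y|X}(y|x) > 0 for all x, y. Then the Augustin–Csiszár mutual information of order α satisfies I_α^C = H(p_X) + sup over strictly positive reverse channels r_{X|Y} of (α/(α−1)) Σ_x p_X(x) log Σ_y p_{Y|X}(y|x) r_{X|Y}(x|y)^{1−1/α}, where H(p_X) := −Σ_x p_X(x) log p_X(x), and the supremum is attained. -/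
/-- Augustin--Csiszár mutual information of order `α`:
the minimum over output distributions `q_Y` of `Σ_x p_X(x) D_α(p_{Y|X}(·|x) ‖ q_Y)`. -/
noncomputable def acMI {X Y : Type*} [Fintype X] [Fintype Y]
    (α : ℝ) (pX : X → ℝ) (pYX : X → Y → ℝ) : EReal :=
  sInf {v : EReal | ∃ qY : Y → ℝ, IsPMF qY ∧
    v = ∑ x, ((pX x : ℝ) : EReal) * renyiDE α (fun y => pYX x y) qY}

/-!
For every output distribution `q` and positive reverse channel `r`, Hölder's inequality applied
to each row `x` (in the direction dictated by the sign of `α - 1`) gives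
`(α/(α-1)) log ∑_y p(y|x) r(x|y)^{1-1/α} ≤ D_α(p(·|x) ‖ q) + log ∑_y q(y) r(x|y)`,
and Gibbs' inequality for the distribution `x ↦ ∑_y q(y) r(x|y)` turns the `p_X`-average of
these bounds into
`H(p_X) + (α/(α-1)) ∑_x p_X(x) log ∑_y p(y|x) r(x|y)^{1-1/α} ≤ ∑_x p_X(x) D_α(p(·|x) ‖ q)`.

Equality is attained at a minimiser `q` of the right-hand side lying in the open simplex: for
`α < 1` the objective is continuous on the simplex and moving a little mass onto a point where
`q` vanishes gains `ε^{1-α}` at a cost `O(ε)`; for `α > 1` the objective blows up like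
`-log q(y)` near the boundary. The first-order condition at `q` along the segment towards each
vertex says exactly that `r(x|y) = p_X(x) p(y|x)^α q(y)^{-α} / ∑_{y'} p(y'|x)^α q(y')^{1-α}`
is a reverse channel, and for this `r` both Hölder and Gibbs are equalities.
-/

open Finset Filter Topology

theorem EReal.coe_finsetSum {ι : Type*} (s : Finset ι) (f : ι → ℝ) :
    ((∑ i ∈ s, f i : ℝ) : EReal) = ∑ i ∈ s, (f i : EReal) :=
  map_sum (⟨⟨((↑) : ℝ → EReal), EReal.coe_zero⟩, EReal.coe_add⟩ : ℝ →+ EReal) f s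

theorem EReal.finsetSum_top {ι : Type*} {s : Finset ι} (hs : s.Nonempty) :
    ∑ _i ∈ s, (⊤ : EReal) = ⊤ := by
  induction hs using Finset.Nonempty.cons_induction with
  | singleton => simp
  | cons a s _ _ ih => rw [sum_cons, ih, EReal.top_add_top]

theorem Real.sum_rpow_mul_rpow_one_sub_le {ι : Type*} (s : Finset ι) {f g : ι → ℝ}
    (hf : ∀ i ∈ s, 0 ≤ f i) (hg : ∀ i ∈ s, 0 ≤ g i) {θ : ℝ} (h₀ : 0 < θ) (h₁ : θ < 1) :
    ∑ i ∈ s, f i ^ θ * g i ^ (1 - θ) ≤ (∑ i ∈ s, f i) ^ θ * (∑ i ∈ s, g i) ^ (1 - θ) := by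
  have h₁' : 1 - θ ≠ 0 := by linarith
  have := Real.inner_le_Lp_mul_Lq_of_nonneg s (Real.HolderConjugate.inv_one_sub_inv h₀ h₁)
    (fun i hi => Real.rpow_nonneg (hf i hi) θ) (fun i hi => Real.rpow_nonneg (hg i hi) (1 - θ))
  simpa [sum_congr rfl fun i hi => Real.rpow_rpow_inv (hf i hi) h₀.ne',
    sum_congr rfl fun i hi => Real.rpow_rpow_inv (hg i hi) h₁'] using this

theorem Real.sum_mul_log_le_sum_mul_log {ι : Type*} (s : Finset ι) {p q : ι → ℝ}
    (hp : ∀ i ∈ s, 0 < p i) (hq : ∀ i ∈ s, 0 < q i) (hpq : ∑ i ∈ s, q i = ∑ i ∈ s, p i) :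
    ∑ i ∈ s, p i * Real.log (q i) ≤ ∑ i ∈ s, p i * Real.log (p i) := by
  have key : ∀ i ∈ s, p i * Real.log (q i) - p i * Real.log (p i) ≤ q i - p i := by
    intro i hi
    have := Real.log_le_sub_one_of_pos (div_pos (hq i hi) (hp i hi))
    rw [Real.log_div (hq i hi).ne' (hp i hi).ne'] at this
    have := mul_le_mul_of_nonneg_left this (hp i hi).le
    rwa [mul_sub, mul_sub, mul_div_cancel₀ _ (hp i hi).ne', mul_one] at this
  have := sum_le_sum key
  rw [sum_sub_distrib, sum_sub_distrib, hpq, sub_self] at this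
  linarith

theorem IsPMF.exists_pos {Z : Type*} [Fintype Z] {q : Z → ℝ} (hq : IsPMF q) : ∃ z, 0 < q z := by
  by_contra! h
  have : ∑ z, q z = 0 := sum_eq_zero fun z _ => le_antisymm (h z) (hq.1 z)
  simp [hq.2] at this

theorem isPMF_const_inv_card (Y : Type*) [Fintype Y] [Nonempty Y] :
    IsPMF fun _ : Y => (Fintype.card Y : ℝ)⁻¹ :=
  ⟨fun _ => by positivity, by simp⟩

def posPMF (Y : Type*) [Fintype Y] : Set (Y → ℝ) := {q | IsPMF q ∧ ∀ y, 0 < q y}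

def towardVertex {Y : Type*} [DecidableEq Y] (q : Y → ℝ) (y₀ : Y) (ε : ℝ) : Y → ℝ :=
  fun y => q y + ε * ((if y = y₀ then 1 else 0) - q y)

theorem towardVertex_zero {Y : Type*} [DecidableEq Y] (q : Y → ℝ) (y₀ : Y) :
    towardVertex q y₀ 0 = q := by
  ext y
  simp [towardVertex]

section Row

variable {Y : Type*} [Fintype Y]

noncomputable def hellingerSum (α : ℝ) (p q : Y → ℝ) : ℝ := ∑ y, p y ^ α * q y ^ (1 - α)

theorem hellingerSum_pos {α : ℝ} {p q : Y → ℝ} (hp : ∀ y, 0 < p y) (hq : ∀ y, 0 ≤ q y)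
    (hq' : ∃ y, 0 < q y) : 0 < hellingerSum α p q := by
  obtain ⟨y₀, hy₀⟩ := hq'
  exact sum_pos' (fun y _ => mul_nonneg (Real.rpow_nonneg (hp y).le α) (Real.rpow_nonneg (hq y) _))
    ⟨y₀, mem_univ _, mul_pos (Real.rpow_pos_of_pos (hp y₀) α) (Real.rpow_pos_of_pos hy₀ _)⟩

theorem hellingerSum_le_of_lt_one {α : ℝ} (h₀ : 0 < α) (h₁ : α < 1) {p q r : Y → ℝ}
    (hp : ∀ y, 0 ≤ p y) (hq : ∀ y, 0 ≤ q y) (hr : ∀ y, 0 < r y) :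
    hellingerSum α p q ≤ (∑ y, p y * r y ^ (1 - 1 / α)) ^ α * (∑ y, q y * r y) ^ (1 - α) := by
  refine le_of_eq_of_le (sum_congr rfl fun y _ => ?_) (Real.sum_rpow_mul_rpow_one_sub_le _
    (fun y _ => mul_nonneg (hp y) (Real.rpow_nonneg (hr y).le _))
    (fun y _ => mul_nonneg (hq y) (hr y).le) h₀ h₁)
  have hry := hr y
  rw [Real.mul_rpow (hp y) (Real.rpow_nonneg hry.le _), Real.mul_rpow (hq y) hry.le,
    ← Real.rpow_mul hry.le]
  have : r y ^ ((1 - 1 / α) * α) * r y ^ (1 - α) = 1 := by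
    rw [← Real.rpow_add hry, show (1 - 1 / α) * α + (1 - α) = 0 by field_simp; ring,
      Real.rpow_zero]
  linear_combination (p y ^ α * q y ^ (1 - α)) * this.symm

theorem sum_mul_rpow_le_of_one_lt {α : ℝ} (h₁ : 1 < α) {p q r : Y → ℝ}
    (hp : ∀ y, 0 ≤ p y) (hq : ∀ y, 0 < q y) (hr : ∀ y, 0 < r y) :
    ∑ y, p y * r y ^ (1 - 1 / α) ≤
      hellingerSum α p q ^ (1 / α) * (∑ y, q y * r y) ^ (1 - 1 / α) := by
  have h₀ : 0 < α := by linarith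
  refine le_of_eq_of_le (sum_congr rfl fun y _ => ?_) (Real.sum_rpow_mul_rpow_one_sub_le _
    (fun y _ => mul_nonneg (Real.rpow_nonneg (hp y) α) (Real.rpow_nonneg (hq y).le _))
    (fun y _ => mul_nonneg (hq y).le (hr y).le) (by positivity) ((div_lt_one h₀).2 h₁))
  have hqy := hq y
  rw [Real.mul_rpow (Real.rpow_nonneg (hp y) α) (Real.rpow_nonneg hqy.le _),
    Real.mul_rpow hqy.le (hr y).le, ← Real.rpow_mul (hp y), ← Real.rpow_mul hqy.le,
    mul_one_div_cancel h₀.ne', Real.rpow_one]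
  have : q y ^ ((1 - α) * (1 / α)) * q y ^ (1 - 1 / α) = 1 := by
    rw [← Real.rpow_add hqy, show (1 - α) * (1 / α) + (1 - 1 / α) = 0 by field_simp; ring,
      Real.rpow_zero]
  linear_combination (p y * r y ^ (1 - 1 / α)) * this.symm

theorem mul_log_sum_mul_rpow_le {α : ℝ} (hα : (0 < α ∧ α < 1) ∨ 1 < α) {p q r : Y → ℝ}
    (hp : ∀ y, 0 < p y) (hq : IsPMF q) (hq' : 1 < α → ∀ y, 0 < q y) (hr : ∀ y, 0 < r y) :
    α / (α - 1) * Real.log (∑ y, p y * r y ^ (1 - 1 / α)) ≤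
      1 / (α - 1) * Real.log (hellingerSum α p q) + Real.log (∑ y, q y * r y) := by
  obtain ⟨y₀, hy₀⟩ := hq.exists_pos
  have hA := hellingerSum_pos (α := α) hp hq.1 ⟨y₀, hy₀⟩
  have hB : 0 < ∑ y, p y * r y ^ (1 - 1 / α) :=
    sum_pos (fun y _ => mul_pos (hp y) (Real.rpow_pos_of_pos (hr y) _)) ⟨y₀, mem_univ _⟩
  have hT : 0 < ∑ y, q y * r y :=
    sum_pos' (fun y _ => mul_nonneg (hq.1 y) (hr y).le) ⟨y₀, mem_univ _, mul_pos hy₀ (hr y₀)⟩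
  set A := hellingerSum α p q
  set B := ∑ y, p y * r y ^ (1 - 1 / α)
  set T := ∑ y, q y * r y
  have hα₀ : α ≠ 0 := by rcases hα with ⟨h, -⟩ | h <;> positivity
  have hα₁ : α - 1 ≠ 0 := by rcases hα with ⟨-, h⟩ | h <;> [exact (sub_neg.2 h).ne; linarith]
  rcases hα with ⟨h₀, h₁⟩ | h₁
  · have key := Real.log_le_log hA (hellingerSum_le_of_lt_one h₀ h₁ (fun y => (hp y).le) hq.1 hr)
    rw [Real.log_mul (Real.rpow_pos_of_pos hB _).ne' (Real.rpow_pos_of_pos hT _).ne',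
      Real.log_rpow hB, Real.log_rpow hT] at key
    calc α / (α - 1) * Real.log B
        = 1 / (α - 1) * (α * Real.log B + (1 - α) * Real.log T) + Real.log T := by
          field_simp
          ring
      _ ≤ 1 / (α - 1) * Real.log A + Real.log T := by
          gcongr ?_ + _
          exact mul_le_mul_of_nonpos_left key (one_div_nonpos.2 (by linarith))
  · have key := Real.log_le_log hB (sum_mul_rpow_le_of_one_lt h₁ (fun y => (hp y).le) (hq' h₁) hr)
    rw [Real.log_mul (Real.rpow_pos_of_pos hA _).ne' (Real.rpow_pos_of_pos hT _).ne',
      Real.log_rpow hA, Real.log_rpow hT] at key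
    calc α / (α - 1) * Real.log B
        ≤ α / (α - 1) * (1 / α * Real.log A + (1 - 1 / α) * Real.log T) :=
          mul_le_mul_of_nonneg_left key (div_nonneg (by linarith) (by linarith))
      _ = 1 / (α - 1) * Real.log A + Real.log T := by
          field_simp

theorem sum_mul_rpow_div_hellingerSum {α : ℝ} (hα : α ≠ 0) {p q : Y → ℝ}
    (hp : ∀ y, 0 < p y) (hq : ∀ y, 0 < q y) {c : ℝ} (hc : 0 ≤ c) :
    ∑ y, p y * (c * p y ^ α * q y ^ (-α) / hellingerSum α p q) ^ (1 - 1 / α) =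
      (c / hellingerSum α p q) ^ (1 - 1 / α) * hellingerSum α p q := by
  have hA : 0 ≤ hellingerSum α p q := sum_nonneg fun y _ => by
    have := hp y; have := hq y; positivity
  rw [hellingerSum, mul_sum, ← hellingerSum]
  refine sum_congr rfl fun y _ => ?_
  have hpy := hp y
  have hqy := hq y
  rw [show c * p y ^ α * q y ^ (-α) / hellingerSum α p q =
      c / hellingerSum α p q * (p y ^ α * q y ^ (-α)) by ring,
    Real.mul_rpow (div_nonneg hc hA) (by positivity), Real.mul_rpow (by positivity) (by positivity),
    ← Real.rpow_mul hpy.le, ← Real.rpow_mul hqy.le, show α * (1 - 1 / α) = α - 1 by field_simp,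
    show -α * (1 - 1 / α) = 1 - α by field_simp; ring, Real.rpow_sub_one hpy.ne']
  field_simp

noncomputable def augustinReverse {X : Type*} (α : ℝ) (pX : X → ℝ) (pYX : X → Y → ℝ)
    (q : Y → ℝ) : Y → X → ℝ :=
  fun y x => pX x * pYX x y ^ α * q y ^ (-α) / hellingerSum α (pYX x) q

theorem augustinReverse_pos {X : Type*} {α : ℝ} {pX : X → ℝ} (hpXpos : ∀ x, 0 < pX x)
    {pYX : X → Y → ℝ} (hpYXpos : ∀ x y, 0 < pYX x y) {q : Y → ℝ} (hq : ∀ y, 0 < q y)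
    (y : Y) (x : X) : 0 < augustinReverse α pX pYX q y x :=
  div_pos (mul_pos (mul_pos (hpXpos x) (Real.rpow_pos_of_pos (hpYXpos x y) α))
    (Real.rpow_pos_of_pos (hq y) _)) (hellingerSum_pos (hpYXpos x) (fun y => (hq y).le) ⟨y, hq y⟩)

variable [DecidableEq Y]

theorem sum_towardVertex {q : Y → ℝ} (hq : ∑ y, q y = 1) (y₀ : Y) (ε : ℝ) :
    ∑ y, towardVertex q y₀ ε y = 1 := by
  simp [towardVertex, sum_add_distrib, ← mul_sum, sum_sub_distrib, hq]

theorem hasDerivAt_hellingerSum_towardVertex {α : ℝ} (p : Y → ℝ) {q : Y → ℝ}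
    (hq : ∀ y, 0 < q y) (y₀ : Y) :
    HasDerivAt (fun ε => hellingerSum α p (towardVertex q y₀ ε))
      ((1 - α) * (p y₀ ^ α * q y₀ ^ (-α) - hellingerSum α p q)) 0 := by
  let d : Y → ℝ := fun y => (if y = y₀ then 1 else 0) - q y
  have hterm : ∀ y, HasDerivAt (fun ε => p y ^ α * (q y + ε * d y) ^ (1 - α))
      (p y ^ α * (d y * (1 - α) * q y ^ (-α))) 0 := fun y => by
    have := ((hasDerivAt_mul_const (x := 0) (d y)).const_add (q y)).rpow_const (p := 1 - α)
      (Or.inl (by simpa using (hq y).ne'))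
    simpa using this.const_mul (p y ^ α)
  refine (HasDerivAt.fun_sum fun y _ => hterm y).congr_deriv ?_
  have hrow : ∀ y, p y ^ α * (d y * (1 - α) * q y ^ (-α)) =
      (1 - α) * ((if y = y₀ then p y ^ α * q y ^ (-α) else 0) - p y ^ α * q y ^ (1 - α)) := by
    intro y
    rw [show 1 - α = -α + 1 by ring, Real.rpow_add_one (hq y).ne']
    split_ifs <;> simp [d, *] <;> ring
  rw [sum_congr rfl fun y _ => hrow y, ← mul_sum, sum_sub_distrib, sum_ite_eq',
    if_pos (mem_univ _), hellingerSum]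

theorem hellingerSum_lt_towardVertex {α : ℝ} (h₀ : 0 < α) (h₁ : α < 1) {p q : Y → ℝ}
    (hp : ∀ y, 0 ≤ p y) (hq : ∀ y, 0 ≤ q y) {y₀ : Y} (hy₀ : q y₀ = 0) {ε : ℝ} (hε₀ : 0 < ε)
    (hε₁ : ε < 1) (hε : hellingerSum α p q < ε ^ (-α) * p y₀ ^ α) :
    hellingerSum α p q < hellingerSum α p (towardVertex q y₀ ε) := by
  have hterm : ∀ y, (1 - ε) * q y ^ (1 - α) + (if y = y₀ then ε ^ (1 - α) else 0) ≤
      towardVertex q y₀ ε y ^ (1 - α) := by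
    intro y
    by_cases hy : y = y₀
    · subst hy
      simp [towardVertex, hy₀, Real.zero_rpow (sub_ne_zero.2 h₁.ne')]
    · rw [towardVertex, if_neg hy, if_neg hy, add_zero,
        show q y + ε * (0 - q y) = (1 - ε) * q y by ring, Real.mul_rpow (by linarith) (hq y)]
      exact mul_le_mul_of_nonneg_right (Real.self_le_rpow_of_le_one (by linarith) (by linarith)
        (by linarith)) (Real.rpow_nonneg (hq y) _)
  have hgain : ε * hellingerSum α p q < ε ^ (1 - α) * p y₀ ^ α := by
    rw [sub_eq_add_neg, Real.rpow_add hε₀, Real.rpow_one, mul_assoc]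
    exact mul_lt_mul_of_pos_left hε hε₀
  calc hellingerSum α p q
      < (1 - ε) * hellingerSum α p q + ε ^ (1 - α) * p y₀ ^ α := by linarith
    _ = ∑ y, p y ^ α * ((1 - ε) * q y ^ (1 - α) + (if y = y₀ then ε ^ (1 - α) else 0)) := by
        simp only [hellingerSum, mul_add, sum_add_distrib, mul_sum, mul_ite, mul_zero,
          sum_ite_eq', mem_univ, if_true]
        ring_nf
    _ ≤ hellingerSum α p (towardVertex q y₀ ε) :=
        sum_le_sum fun y _ => mul_le_mul_of_nonneg_left (hterm y) (Real.rpow_nonneg (hp y) α)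

end Row

section

variable {X Y : Type*} [Fintype X] [Fintype Y]

noncomputable def acObjective (α : ℝ) (pX : X → ℝ) (pYX : X → Y → ℝ) (q : Y → ℝ) : ℝ :=
  ∑ x, pX x * (1 / (α - 1) * Real.log (hellingerSum α (pYX x) q))

noncomputable def dualObjective (α : ℝ) (pX : X → ℝ) (pYX : X → Y → ℝ) (r : Y → X → ℝ) : ℝ :=
  (-∑ x, pX x * Real.log (pX x)) +
    α / (α - 1) * ∑ x, pX x * Real.log (∑ y, pYX x y * r y x ^ (1 - 1 / α))

theorem dualObjective_le_acObjective {α : ℝ} (hα : (0 < α ∧ α < 1) ∨ 1 < α) {pX : X → ℝ}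
    (hpX : IsPMF pX) (hpXpos : ∀ x, 0 < pX x) {pYX : X → Y → ℝ} (hpYXpos : ∀ x y, 0 < pYX x y)
    {q : Y → ℝ} (hq : IsPMF q) (hq' : 1 < α → ∀ y, 0 < q y)
    {r : Y → X → ℝ} (hr : ∀ y, IsPMF (r y)) (hrpos : ∀ y x, 0 < r y x) :
    dualObjective α pX pYX r ≤ acObjective α pX pYX q := by
  obtain ⟨y₀, hy₀⟩ := hq.exists_pos
  have hT : ∀ x, 0 < ∑ y, q y * r y x := fun x =>
    sum_pos' (fun y _ => mul_nonneg (hq.1 y) (hrpos y x).le)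
      ⟨y₀, mem_univ _, mul_pos hy₀ (hrpos y₀ x)⟩
  have hTsum : ∑ x, ∑ y, q y * r y x = ∑ x, pX x := by
    rw [sum_comm, hpX.2, ← hq.2]
    exact sum_congr rfl fun y _ => by rw [← mul_sum, (hr y).2, mul_one]
  have gibbs := Real.sum_mul_log_le_sum_mul_log univ (fun x _ => hpXpos x) (fun x _ => hT x) hTsum
  have rowwise := sum_le_sum fun x (_ : x ∈ univ) => mul_le_mul_of_nonneg_left
    (mul_log_sum_mul_rpow_le hα (hpYXpos x) hq hq' fun y => hrpos y x) (hpXpos x).le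
  simp only [mul_add, sum_add_distrib, mul_left_comm (pX _) (α / (α - 1)), ← mul_sum]
    at rowwise
  rw [dualObjective, acObjective]
  linarith

theorem sum_mul_renyiDE_eq_coe_acObjective {α : ℝ} {pX : X → ℝ} {pYX : X → Y → ℝ} {q : Y → ℝ}
    (hfin : ¬(1 < α ∧ ∃ y, q y = 0)) :
    ∑ x, ((pX x : ℝ) : EReal) * renyiDE α (fun y => pYX x y) q = acObjective α pX pYX q := by
  rw [acObjective, EReal.coe_finsetSum]
  refine sum_congr rfl fun x _ => ?_
  rw [renyiDE, if_neg fun ⟨h₁, y, _, hy⟩ => hfin ⟨h₁, y, hy⟩, ← EReal.coe_mul]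
  rfl

theorem acMI_le_acObjective (α : ℝ) (pX : X → ℝ) (pYX : X → Y → ℝ) {q : Y → ℝ}
    (hq : q ∈ posPMF Y) : acMI α pX pYX ≤ acObjective α pX pYX q :=
  sInf_le ⟨q, hq.1, (sum_mul_renyiDE_eq_coe_acObjective fun ⟨_, y, hy⟩ => (hq.2 y).ne' hy).symm⟩

theorem dualObjective_le_acMI {α : ℝ} (hα : (0 < α ∧ α < 1) ∨ 1 < α) {pX : X → ℝ}
    (hpX : IsPMF pX) (hpXpos : ∀ x, 0 < pX x) {pYX : X → Y → ℝ} (hpYXpos : ∀ x y, 0 < pYX x y)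
    {r : Y → X → ℝ} (hr : ∀ y, IsPMF (r y)) (hrpos : ∀ y x, 0 < r y x) :
    (dualObjective α pX pYX r : EReal) ≤ acMI α pX pYX := by
  refine le_sInf ?_
  rintro _ ⟨q, hq, rfl⟩
  by_cases hinf : 1 < α ∧ ∃ y, q y = 0
  · obtain ⟨h₁, y₀, hy₀⟩ := hinf
    obtain ⟨x₀, -⟩ := hpX.exists_pos
    have htop : ∀ x, ((pX x : ℝ) : EReal) * renyiDE α (fun y => pYX x y) q = ⊤ := fun x => by
      rw [renyiDE, if_pos ⟨h₁, y₀, (hpYXpos x y₀).ne', hy₀⟩, EReal.coe_mul_top_of_pos (hpXpos x)]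
    rw [sum_congr rfl fun x _ => htop x, EReal.finsetSum_top ⟨x₀, mem_univ _⟩]
    exact le_top
  · rw [sum_mul_renyiDE_eq_coe_acObjective hinf, EReal.coe_le_coe_iff]
    exact dualObjective_le_acObjective hα hpX hpXpos hpYXpos hq
      (fun h₁ y => (hq.1 y).lt_of_ne fun h => hinf ⟨h₁, y, h.symm⟩) hr hrpos

theorem continuousOn_acObjective {α : ℝ} {pX : X → ℝ} {pYX : X → Y → ℝ} {s : Set (Y → ℝ)}
    (hpow : ∀ q ∈ s, ∀ y, q y ≠ 0 ∨ 0 ≤ 1 - α)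
    (hA : ∀ q ∈ s, ∀ x, hellingerSum α (pYX x) q ≠ 0) :
    ContinuousOn (acObjective α pX pYX) s :=
  continuousOn_finsetSum _ fun x _ => continuousOn_const.mul <| continuousOn_const.mul <|
    ContinuousOn.log (continuousOn_finsetSum _ fun y _ => continuousOn_const.mul <|
      (continuous_apply y).continuousOn.rpow_const fun q hq => hpow q hq y) fun q hq => hA q hq x

theorem exists_acObjective_lt_of_eq_zero [Nonempty X] {α : ℝ} (h₀ : 0 < α) (h₁ : α < 1)
    {pX : X → ℝ} (hpXpos : ∀ x, 0 < pX x) {pYX : X → Y → ℝ} (hpYXpos : ∀ x y, 0 < pYX x y)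
    {q : Y → ℝ} (hq : IsPMF q) {y₀ : Y} (hy₀ : q y₀ = 0) :
    ∃ q', IsPMF q' ∧ acObjective α pX pYX q' < acObjective α pX pYX q := by
  classical
  obtain ⟨ε, hε₀, hε₁, hε⟩ : ∃ ε, 0 < ε ∧ ε < 1 ∧
      ∀ x, hellingerSum α (pYX x) q < ε ^ (-α) * pYX x y₀ ^ α :=
    (eventually_mem_nhdsWithin.and <|
      (eventually_nhdsWithin_of_eventually_nhds (eventually_lt_nhds one_pos)).and <|
      eventually_all.2 fun x => ((tendsto_rpow_neg_nhdsGT_zero (neg_lt_zero.2 h₀)).atTop_mul_const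
        (Real.rpow_pos_of_pos (hpYXpos x y₀) α)).eventually_gt_atTop _).exists
  have hq' : IsPMF (towardVertex q y₀ ε) := by
    refine ⟨fun y => ?_, sum_towardVertex hq.2 y₀ ε⟩
    have := hq.1 y
    unfold towardVertex
    split_ifs <;> nlinarith
  refine ⟨_, hq', sum_lt_sum_of_nonempty univ_nonempty fun x _ => ?_⟩
  have hA := hellingerSum_pos (α := α) (hpYXpos x) hq.1 hq.exists_pos
  have hgrow := hellingerSum_lt_towardVertex h₀ h₁ (fun y => (hpYXpos x y).le) hq.1 hy₀ hε₀ hε₁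
    (hε x)
  exact mul_lt_mul_of_pos_left (mul_lt_mul_of_neg_left (Real.log_lt_log hA hgrow)
    (one_div_neg.2 (by linarith))) (hpXpos x)

theorem exists_isMinOn_acObjective_of_lt_one [Nonempty X] [Nonempty Y] {α : ℝ} (h₀ : 0 < α)
    (h₁ : α < 1) {pX : X → ℝ} (hpXpos : ∀ x, 0 < pX x) {pYX : X → Y → ℝ}
    (hpYXpos : ∀ x y, 0 < pYX x y) :
    ∃ q ∈ posPMF Y, IsMinOn (acObjective α pX pYX) (posPMF Y) q := by
  classical
  obtain ⟨q, hq, hmin⟩ := (isCompact_stdSimplex ℝ Y).exists_isMinOn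
    ⟨_, single_mem_stdSimplex ℝ (Classical.arbitrary Y)⟩
    (continuousOn_acObjective (fun _ _ _ => Or.inr (by linarith)) fun q hq x =>
      (hellingerSum_pos (hpYXpos x) hq.1 (IsPMF.exists_pos hq)).ne')
  have hpos : ∀ y, 0 < q y := fun y => (hq.1 y).lt_of_ne' fun hy => by
    obtain ⟨q', hq', hlt⟩ := exists_acObjective_lt_of_eq_zero h₀ h₁ hpXpos hpYXpos hq hy
    exact (hmin hq').not_gt hlt
  exact ⟨q, ⟨hq, hpos⟩, hmin.on_subset fun q' hq' => hq'.1⟩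

theorem sub_log_le_acObjective {α : ℝ} (h₁ : 1 < α) {pX : X → ℝ} (hpX : IsPMF pX)
    {pYX : X → Y → ℝ} (hpYXpos : ∀ x y, 0 < pYX x y) {q : Y → ℝ} (hq : ∀ y, 0 < q y) (y : Y) :
    α / (α - 1) * ∑ x, pX x * Real.log (pYX x y) - Real.log (q y) ≤ acObjective α pX pYX q := by
  have hα : α - 1 ≠ 0 := by linarith
  have hrow : ∀ x, α / (α - 1) * Real.log (pYX x y) - Real.log (q y) ≤
      1 / (α - 1) * Real.log (hellingerSum α (pYX x) q) := by
    intro x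
    have hpy := hpYXpos x y
    have hqy := hq y
    have hle : pYX x y ^ α * q y ^ (1 - α) ≤ hellingerSum α (pYX x) q :=
      single_le_sum (f := fun y => pYX x y ^ α * q y ^ (1 - α))
        (fun y _ => by have := hpYXpos x y; have := hq y; positivity) (mem_univ y)
    have hlog := Real.log_le_log (by positivity) hle
    rw [Real.log_mul (by positivity) (by positivity), Real.log_rpow hpy, Real.log_rpow hqy] at hlog
    calc α / (α - 1) * Real.log (pYX x y) - Real.log (q y)
        = 1 / (α - 1) * (α * Real.log (pYX x y) + (1 - α) * Real.log (q y)) := by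
          field_simp
          ring
      _ ≤ _ := mul_le_mul_of_nonneg_left hlog (one_div_nonneg.2 (by linarith))
  calc α / (α - 1) * ∑ x, pX x * Real.log (pYX x y) - Real.log (q y)
      = ∑ x, pX x * (α / (α - 1) * Real.log (pYX x y) - Real.log (q y)) := by
        simp only [mul_sub, sum_sub_distrib, ← sum_mul, hpX.2, one_mul, mul_sum, mul_left_comm]
    _ ≤ acObjective α pX pYX q := sum_le_sum fun x _ => mul_le_mul_of_nonneg_left (hrow x) (hpX.1 x)

/-- The minimum over `{q | ∀ y, δ ≤ q y}` is global: for small `δ`, `sub_log_le_acObjective`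
puts the objective above its value at the uniform distribution wherever some `q y < δ`. -/
theorem exists_isMinOn_acObjective_of_one_lt [Nonempty Y] {α : ℝ} (h₁ : 1 < α) {pX : X → ℝ}
    (hpX : IsPMF pX) {pYX : X → Y → ℝ} (hpYXpos : ∀ x y, 0 < pYX x y) :
    ∃ q ∈ posPMF Y, IsMinOn (acObjective α pX pYX) (posPMF Y) q := by
  set u : Y → ℝ := fun _ => (Fintype.card Y : ℝ)⁻¹
  have hupos : 0 < (Fintype.card Y : ℝ)⁻¹ := by positivity
  let C : Y → ℝ := fun y => α / (α - 1) * ∑ x, pX x * Real.log (pYX x y) - acObjective α pX pYX u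
  obtain ⟨δ, hδ, hδu, hδC⟩ : ∃ δ, 0 < δ ∧ δ ≤ (Fintype.card Y : ℝ)⁻¹ ∧ ∀ y, Real.log δ < C y :=
    (eventually_mem_nhdsWithin.and <|
      (eventually_nhdsWithin_of_eventually_nhds (eventually_le_nhds hupos)).and <|
      eventually_all.2 fun y => Real.tendsto_log_nhdsGT_zero.eventually_lt_atBot (C y)).exists
  have hK : IsCompact (stdSimplex ℝ Y ∩ {q | ∀ y, δ ≤ q y}) :=
    (isCompact_stdSimplex ℝ Y).inter_right <| by
      simpa only [Set.ofPred_forall] using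
        isClosed_iInter fun y => isClosed_le continuous_const (continuous_apply y)
  have huK : u ∈ stdSimplex ℝ Y ∩ {q | ∀ y, δ ≤ q y} := ⟨isPMF_const_inv_card Y, fun _ => hδu⟩
  obtain ⟨q, ⟨hqP, hqδ⟩, hmin⟩ := hK.exists_isMinOn ⟨u, huK⟩ <|
    continuousOn_acObjective (fun q hq y => Or.inl (hδ.trans_le (hq.2 y)).ne') fun q hq x =>
      (hellingerSum_pos (hpYXpos x) hq.1.1 (IsPMF.exists_pos hq.1)).ne'
  refine ⟨q, ⟨hqP, fun y => hδ.trans_le (hqδ y)⟩, fun q' hq' => ?_⟩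
  by_cases hq'δ : ∀ y, δ ≤ q' y
  · exact hmin ⟨hq'.1, hq'δ⟩
  · simp only [not_forall, not_le] at hq'δ
    obtain ⟨y, hy⟩ := hq'δ
    have hqu : acObjective α pX pYX q ≤ acObjective α pX pYX u := hmin huK
    have := sub_log_le_acObjective h₁ hpX hpYXpos hq'.2 y
    have := Real.log_lt_log (hq'.2 y) hy
    have := hδC y
    show acObjective α pX pYX q ≤ acObjective α pX pYX q'
    linarith

theorem hasDerivAt_acObjective_towardVertex [DecidableEq Y] {α : ℝ} (hα : α ≠ 1) (pX : X → ℝ)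
    {pYX : X → Y → ℝ} (hpYXpos : ∀ x y, 0 < pYX x y) {q : Y → ℝ} (hq : ∀ y, 0 < q y) (y₀ : Y) :
    HasDerivAt (fun ε => acObjective α pX pYX (towardVertex q y₀ ε))
      (∑ x, (pX x - augustinReverse α pX pYX q y₀ x)) 0 := by
  refine HasDerivAt.fun_sum fun x _ => ?_
  have hA := (hellingerSum_pos (α := α) (hpYXpos x) (fun y => (hq y).le) ⟨y₀, hq y₀⟩).ne'
  have := (((hasDerivAt_hellingerSum_towardVertex (α := α) (pYX x) hq y₀).log
    (by rwa [towardVertex_zero])).const_mul (1 / (α - 1))).const_mul (pX x)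
  refine this.congr_deriv ?_
  have := sub_ne_zero.2 hα
  simp only [towardVertex_zero, augustinReverse]
  field_simp
  ring

theorem sum_augustinReverse_eq_one {α : ℝ} (hα : α ≠ 1) {pX : X → ℝ} (hpX : IsPMF pX)
    {pYX : X → Y → ℝ} (hpYXpos : ∀ x y, 0 < pYX x y) {q : Y → ℝ} (hq : q ∈ posPMF Y)
    (hmin : IsMinOn (acObjective α pX pYX) (posPMF Y) q) (y₀ : Y) :
    ∑ x, augustinReverse α pX pYX q y₀ x = 1 := by
  classical
  have hnear : ∀ᶠ ε in 𝓝 (0 : ℝ), towardVertex q y₀ ε ∈ posPMF Y := by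
    have hpos : ∀ᶠ ε in 𝓝 (0 : ℝ), ∀ y, 0 < towardVertex q y₀ ε y := eventually_all.2 fun y =>
      ((continuous_const.add (continuous_id.mul continuous_const)).tendsto' 0 (q y)
        (by simp)).eventually (lt_mem_nhds (hq.2 y))
    filter_upwards [hpos] with ε hε
    exact ⟨⟨fun y => (hε y).le, sum_towardVertex hq.1.2 y₀ ε⟩, hε⟩
  have hlocal : IsLocalMin (fun ε => acObjective α pX pYX (towardVertex q y₀ ε)) 0 := by
    filter_upwards [hnear] with ε hε
    simpa [towardVertex_zero] using hmin hε
  have := hlocal.hasDerivAt_eq_zero (hasDerivAt_acObjective_towardVertex hα pX hpYXpos hq.2 y₀)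
  rw [sum_sub_distrib, hpX.2] at this
  linarith

theorem dualObjective_augustinReverse [Nonempty Y] {α : ℝ} (hα₀ : α ≠ 0) (hα₁ : α ≠ 1)
    {pX : X → ℝ} (hpXpos : ∀ x, 0 < pX x) {pYX : X → Y → ℝ} (hpYXpos : ∀ x y, 0 < pYX x y)
    {q : Y → ℝ} (hq : ∀ y, 0 < q y) :
    dualObjective α pX pYX (augustinReverse α pX pYX q) = acObjective α pX pYX q := by
  rw [dualObjective, acObjective, mul_sum, ← sum_neg_distrib, ← sum_add_distrib]
  refine sum_congr rfl fun x _ => ?_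
  have hA := hellingerSum_pos (α := α) (hpYXpos x) (fun y => (hq y).le)
    ⟨_, hq (Classical.arbitrary Y)⟩
  have hc := hpXpos x
  simp only [augustinReverse]
  rw [sum_mul_rpow_div_hellingerSum hα₀ (hpYXpos x) hq hc.le,
    Real.log_mul (Real.rpow_pos_of_pos (div_pos hc hA) _).ne' hA.ne',
    Real.log_rpow (div_pos hc hA), Real.log_div hc.ne' hA.ne']
  have := sub_ne_zero.2 hα₁
  field_simp
  ring

end

theorem acMI_eq_entropy_add_sup_general {X Y : Type*} [Fintype X] [Fintype Y] [Nonempty X] [Nonempty Y]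
    (α : ℝ) (hα : (0 < α ∧ α < 1) ∨ 1 < α)
    (pX : X → ℝ) (hpX : IsPMF pX) (hpXpos : ∀ x, 0 < pX x)
    (pYX : X → Y → ℝ) (hpYXpos : ∀ x y, 0 < pYX x y) :
    IsGreatest
      {v : EReal | ∃ r : Y → X → ℝ, (∀ y, IsPMF (r y)) ∧ (∀ y x, 0 < r y x) ∧
        v = (((-∑ x, pX x * Real.log (pX x))
              + (α / (α - 1)) * ∑ x, pX x *
                  Real.log (∑ y, pYX x y * r y x ^ (1 - 1 / α)) : ℝ) : EReal)}
      (acMI α pX pYX) := by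
  have hα₀ : α ≠ 0 := by rcases hα with ⟨h, -⟩ | h <;> positivity
  have hα₁ : α ≠ 1 := by rcases hα with ⟨-, h⟩ | h <;> [exact h.ne; exact h.ne']
  obtain ⟨q, hq, hmin⟩ : ∃ q ∈ posPMF Y, IsMinOn (acObjective α pX pYX) (posPMF Y) q := by
    rcases hα with ⟨h₀, h₁⟩ | h₁
    · exact exists_isMinOn_acObjective_of_lt_one h₀ h₁ hpXpos hpYXpos
    · exact exists_isMinOn_acObjective_of_one_lt h₁ hpX hpYXpos
  have hrpos := augustinReverse_pos (α := α) hpXpos hpYXpos hq.2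
  have hr : ∀ y, IsPMF (augustinReverse α pX pYX q y) := fun y =>
    ⟨fun x => (hrpos y x).le, sum_augustinReverse_eq_one hα₁ hpX hpYXpos hq hmin y⟩
  have hupper : ∀ r : Y → X → ℝ, (∀ y, IsPMF (r y)) → (∀ y x, 0 < r y x) →
      (dualObjective α pX pYX r : EReal) ≤ acMI α pX pYX :=
    fun r hr hrpos => dualObjective_le_acMI hα hpX hpXpos hpYXpos hr hrpos
  refine ⟨⟨augustinReverse α pX pYX q, hr, hrpos, le_antisymm ?_ (hupper _ hr hrpos)⟩, ?_⟩
  · show _ ≤ ((dualObjective α pX pYX (augustinReverse α pX pYX q) : ℝ) : EReal)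
    rw [dualObjective_augustinReverse hα₀ hα₁ hpXpos hpYXpos hq.2]
    exact acMI_le_acObjective α pX pYX hq
  · rintro _ ⟨r, hr, hrpos, rfl⟩
    exact hupper r hr hrpos

/-- The Augustin--Csiszár mutual information of order `α` equals
`H(p_X) + sup_{r_{X|Y}} (α/(α−1)) Σ_x p_X(x) log Σ_y p_{Y|X}(y|x) r(x|y)^{1−1/α}`,
the supremum being over strictly positive reverse channels, and attained. -/
theorem acMI_eq_entropy_add_sup {X Y : Type*} [Fintype X] [Fintype Y] [Nonempty X] [Nonempty Y]
    (α : ℝ) (hα : (0 < α ∧ α < 1) ∨ 1 < α)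
    (pX : X → ℝ) (hpX : IsPMF pX) (hpXpos : ∀ x, 0 < pX x)
    (pYX : X → Y → ℝ) (hpYX : ∀ x, IsPMF (pYX x)) (hpYXpos : ∀ x y, 0 < pYX x y) :
    IsGreatest
      {v : EReal | ∃ r : Y → X → ℝ, (∀ y, IsPMF (r y)) ∧ (∀ y x, 0 < r y x) ∧
        v = (((-∑ x, pX x * Real.log (pX x))
              + (α / (α - 1)) * ∑ x, pX x *
                  Real.log (∑ y, pYX x y * r y x ^ (1 - 1 / α)) : ℝ) : EReal)}
      (acMI α pX pYX) :=
  acMI_eq_entropy_add_sup_general α hα pX hpX hpXpos pYX hpYXpos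
end
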